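/- arXiv:2301.13353 — 8 statements merged into one kernel-verified Lean document; each statement's English description precedes it below -/
import Mathlib

section
/- Suppose ‖Ĥ − H‖₂ ≤ C_H·η and ‖Ŝ − S‖₂ ≤ C_S·η. Then for every nonzero vector a ∈ ℂ^d one has Ê(η, a) ≥ min{E(a), 0}. -/
open Matrix
open scoped ComplexOrder

/-- Spectral norm (L2 operator norm) of a complex square matrix. -/
noncomputable def specNorm {d : ℕ} (A : Matrix (Fin d) (Fin d) ℂ) : ℝ :=
  ‖Matrix.toEuclideanCLM (𝕜 := ℂ) A‖

/-- Rayleigh quotient ⟨A⟩(a) = (a† A a)/(a† a) (real-valued for Hermitian `A`). -/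
noncomputable def rq {d : ℕ} (A : Matrix (Fin d) (Fin d) ℂ) (a : Fin d → ℂ) : ℝ :=
  (star a ⬝ᵥ A.mulVec a).re / (star a ⬝ᵥ a).re

lemma quad_abs_le {d : ℕ} (A : Matrix (Fin d) (Fin d) ℂ) (a : Fin d → ℂ) :
    |(star a ⬝ᵥ A.mulVec a).re| ≤ specNorm A * (star a ⬝ᵥ a).re := by
  set x : EuclideanSpace ℂ (Fin d) := (WithLp.equiv 2 _).symm a with hx
  have h1 : (inner ℂ x ((Matrix.toEuclideanCLM (𝕜 := ℂ) A) x) : ℂ) = star a ⬝ᵥ A.mulVec a := by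
    rw [hx, WithLp.equiv_symm_apply, Matrix.toEuclideanCLM_toLp, EuclideanSpace.inner_toLp_toLp,
      dotProduct_comm]
  have h2 : ((star a ⬝ᵥ a : ℂ)).re = ‖x‖ ^ 2 := by
    rw [show (star a ⬝ᵥ a : ℂ) = inner ℂ x x by
      rw [hx, WithLp.equiv_symm_apply, EuclideanSpace.inner_toLp_toLp, dotProduct_comm]]
    exact_mod_cast inner_self_eq_norm_sq (𝕜 := ℂ) x
  calc |(star a ⬝ᵥ A.mulVec a).re| ≤ ‖star a ⬝ᵥ A.mulVec a‖ :=
        Complex.abs_re_le_norm _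
    _ = ‖(inner ℂ x ((Matrix.toEuclideanCLM (𝕜 := ℂ) A) x) : ℂ)‖ := by rw [h1]
    _ ≤ ‖x‖ * ‖(Matrix.toEuclideanCLM (𝕜 := ℂ) A) x‖ := norm_inner_le_norm _ _
    _ ≤ ‖x‖ * (specNorm A * ‖x‖) := by
        gcongr; exact (Matrix.toEuclideanCLM (𝕜 := ℂ) A).le_opNorm x
    _ = specNorm A * (star a ⬝ᵥ a).re := by rw [h2]; ring

lemma dot_self_pos {d : ℕ} {a : Fin d → ℂ} (ha : a ≠ 0) :
    0 < (star a ⬝ᵥ a).re := by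
  set x : EuclideanSpace ℂ (Fin d) := (WithLp.equiv 2 _).symm a with hx
  have hx0 : x ≠ 0 := by
    simpa [hx] using (WithLp.equiv 2 (Fin d → ℂ)).symm.injective.ne_iff.mpr
      (by simpa using ha)
  have h2 : ((star a ⬝ᵥ a : ℂ)).re = ‖x‖ ^ 2 := by
    rw [show (star a ⬝ᵥ a : ℂ) = inner ℂ x x by
      rw [hx, WithLp.equiv_symm_apply, EuclideanSpace.inner_toLp_toLp, dotProduct_comm]]
    exact_mod_cast inner_self_eq_norm_sq (𝕜 := ℂ) x
  rw [h2]
  exact pow_pos (norm_pos_iff.mpr hx0) 2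

lemma rq_abs_sub_le {d : ℕ} (A B : Matrix (Fin d) (Fin d) ℂ) {a : Fin d → ℂ} (ha : a ≠ 0) :
    |rq A a - rq B a| ≤ specNorm (A - B) := by
  have hpos := dot_self_pos ha
  have hsub : rq A a - rq B a = (star a ⬝ᵥ (A - B).mulVec a).re / (star a ⬝ᵥ a).re := by
    rw [rq, rq, div_sub_div_same, Matrix.sub_mulVec, dotProduct_sub, Complex.sub_re]
  rw [hsub, abs_div, abs_of_pos hpos, div_le_iff₀ hpos]
  exact quad_abs_le (A - B) a

theorem stmt0 {d : ℕ} (hd : 1 ≤ d)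
    (H S Hhat Shat : Matrix (Fin d) (Fin d) ℂ)
    (hH : H.IsHermitian) (hS : S.IsHermitian)
    (hHhat : Hhat.IsHermitian) (hShat : Shat.IsHermitian)
    (hSpd : S.PosDef)
    (CH CS η : ℝ) (hCH : 0 < CH) (hCS : 0 < CS) (hη : 0 < η)
    (hHnorm : specNorm (Hhat - H) ≤ CH * η)
    (hSnorm : specNorm (Shat - S) ≤ CS * η) :
    ∀ a : Fin d → ℂ, a ≠ 0 →
      (rq Hhat a + CH * η) / (rq Shat a + CS * η) ≥ min (rq H a / rq S a) 0 := by
  intro a ha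
  have hpos := dot_self_pos ha
  have hs : 0 < rq S a := div_pos (hSpd.re_dotProduct_pos ha) hpos
  have hHd : |rq Hhat a - rq H a| ≤ CH * η := (rq_abs_sub_le Hhat H ha).trans hHnorm
  have hSd : |rq Shat a - rq S a| ≤ CS * η := (rq_abs_sub_le Shat S ha).trans hSnorm
  rw [abs_le] at hHd hSd
  set h := rq H a
  set s := rq S a
  set h' := rq Hhat a
  set s' := rq Shat a
  have hnum : h ≤ h' + CH * η := by linarith [hHd.1]
  have hden : s ≤ s' + CS * η := by linarith [hSd.1]
  have hden0 : 0 < s' + CS * η := lt_of_lt_of_le hs hden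
  rcases le_or_gt 0 (h' + CH * η) with hc | hc
  · exact le_trans (min_le_right _ _) (div_nonneg hc hden0.le)
  · have hh : h < 0 := lt_of_le_of_lt hnum hc
    rw [min_eq_left (le_of_lt (div_neg_of_neg_of_pos hh hs))]
    rw [ge_iff_le, div_le_div_iff₀ hs hden0]
    nlinarith
end

section
/- Suppose ‖Ĥ − H‖₂ ≤ C_H·η and ‖Ŝ − S‖₂ ≤ C_S·η. Then for every nonzero vector a ∈ ℂ^d with Ê(η, a) < 0, one has E(a) ≤ Ê(η, a) ≤ E′(η, a). -/
open Matrix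
open scoped ComplexOrder

lemma key_bound {d : ℕ} (B : Matrix (Fin d) (Fin d) ℂ) (a : Fin d → ℂ) :
    |(star a ⬝ᵥ B.mulVec a).re| ≤ specNorm B * (star a ⬝ᵥ a).re := by
  set x : EuclideanSpace ℂ (Fin d) := (WithLp.equiv 2 _).symm a with hx
  have h1 : star a ⬝ᵥ B.mulVec a = inner ℂ x (Matrix.toEuclideanCLM (𝕜 := ℂ) B x) := by
    rw [hx, WithLp.equiv_symm_apply, Matrix.toEuclideanCLM_toLp, EuclideanSpace.inner_toLp_toLp,
      dotProduct_comm]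
  have h2 : (star a ⬝ᵥ a).re = ‖x‖ ^ 2 := by
    rw [← inner_self_eq_norm_sq (𝕜 := ℂ) x, hx, WithLp.equiv_symm_apply, EuclideanSpace.inner_toLp_toLp,
      dotProduct_comm]
    rfl
  rw [h1, h2]
  calc |(inner ℂ x (Matrix.toEuclideanCLM (𝕜 := ℂ) B x) : ℂ).re|
      ≤ ‖(inner ℂ x (Matrix.toEuclideanCLM (𝕜 := ℂ) B x) : ℂ)‖ := Complex.abs_re_le_norm _
    _ ≤ ‖x‖ * ‖Matrix.toEuclideanCLM (𝕜 := ℂ) B x‖ := norm_inner_le_norm _ _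
    _ ≤ ‖x‖ * (‖Matrix.toEuclideanCLM (𝕜 := ℂ) B‖ * ‖x‖) := by
        gcongr; exact (Matrix.toEuclideanCLM (𝕜 := ℂ) B).le_opNorm x
    _ = specNorm B * ‖x‖ ^ 2 := by ring_nf; rfl

lemma rq_sub {d : ℕ} (A B : Matrix (Fin d) (Fin d) ℂ) (a : Fin d → ℂ) :
    rq A a - rq B a = rq (A - B) a := by
  unfold rq
  rw [div_sub_div_same, Matrix.sub_mulVec, dotProduct_sub, Complex.sub_re]

lemma abs_rq_le {d : ℕ} (B : Matrix (Fin d) (Fin d) ℂ) (a : Fin d → ℂ) (ha : a ≠ 0) :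
    |rq B a| ≤ specNorm B := by
  have hden : 0 < (star a ⬝ᵥ a).re := by
    have h := Matrix.PosDef.re_dotProduct_pos (A := (1 : Matrix (Fin d) (Fin d) ℂ))
      Matrix.PosDef.one ha
    simpa using h
  unfold rq
  rw [abs_div, abs_of_pos hden, div_le_iff₀ hden]
  exact key_bound B a

theorem stmt1 {d : ℕ} (hd : 1 ≤ d)
    (H S Hhat Shat : Matrix (Fin d) (Fin d) ℂ)
    (hH : H.IsHermitian) (hS : S.IsHermitian)
    (hHhat : Hhat.IsHermitian) (hShat : Shat.IsHermitian)
    (hSpd : S.PosDef)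
    (CH CS η : ℝ) (hCH : 0 < CH) (hCS : 0 < CS) (hη : 0 < η)
    (hHnorm : specNorm (Hhat - H) ≤ CH * η)
    (hSnorm : specNorm (Shat - S) ≤ CS * η) :
    ∀ a : Fin d → ℂ, a ≠ 0 →
      (rq Hhat a + CH * η) / (rq Shat a + CS * η) < 0 →
      rq H a / rq S a ≤ (rq Hhat a + CH * η) / (rq Shat a + CS * η) ∧
      (rq Hhat a + CH * η) / (rq Shat a + CS * η) ≤
        (rq H a + 2 * CH * η) / (rq S a + 2 * CS * η) := by
  intro a ha hneg
  have hden : 0 < (star a ⬝ᵥ a).re := by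
    have h := Matrix.PosDef.re_dotProduct_pos (A := (1 : Matrix (Fin d) (Fin d) ℂ))
      Matrix.PosDef.one ha
    simpa using h
  have hs : 0 < rq S a := div_pos (hSpd.re_dotProduct_pos ha) hden
  have hHd : |rq Hhat a - rq H a| ≤ CH * η := by
    rw [rq_sub]; exact (abs_rq_le _ a ha).trans hHnorm
  have hSd : |rq Shat a - rq S a| ≤ CS * η := by
    rw [rq_sub]; exact (abs_rq_le _ a ha).trans hSnorm
  rw [abs_le] at hHd hSd
  set h := rq H a
  set s := rq S a
  set hh := rq Hhat a
  set sh := rq Shat a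
  have hD : 0 < sh + CS * η := by linarith [hSd.1]
  have hN : hh + CH * η < 0 := by
    rcases div_neg_iff.mp hneg with ⟨_, h2⟩ | ⟨h1, _⟩
    · linarith
    · exact h1
  constructor
  · rw [div_le_div_iff₀ hs hD]
    nlinarith [hHd.1, hSd.1, mul_le_mul_of_nonpos_left (show s ≤ sh + CS * η by linarith)
      (le_of_lt hN)]
  · have hD' : 0 < s + 2 * CS * η := by positivity
    rw [div_le_div_iff₀ hD hD']
    rcases le_or_gt 0 (h + 2 * CH * η) with hc | hc
    · nlinarith
    · nlinarith [mul_le_mul_of_nonpos_left (show sh + CS * η ≤ s + 2 * CS * η by linarith)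
        (le_of_lt hc)]
end

section
/- The function g(η) = inf_{a ≠ 0} E′(η, a), defined for η ≥ 0, is continuous on [0, ∞), and it is strictly increasing on the set {η ≥ 0 : g(η) < 0}; that is, if 0 ≤ η₁ < η₂ and g(η₂) < 0 then g(η₁) < g(η₂). -/
open Matrix
open scoped ComplexOrder

namespace Stmt4Aux

variable {d : ℕ}

lemma q_smul (A : Matrix (Fin d) (Fin d) ℂ) (c : ℝ) (a : Fin d → ℂ) :
    (star ((c:ℂ) • a) ⬝ᵥ A.mulVec ((c:ℂ) • a)).re
      = c^2 * (star a ⬝ᵥ A.mulVec a).re := by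
  rw [Matrix.mulVec_smul, star_smul, smul_dotProduct, dotProduct_smul]
  simp only [star_trivial, RCLike.star_def, Complex.conj_ofReal, smul_eq_mul, ← mul_assoc,
    ← Complex.ofReal_mul, Complex.re_ofReal_mul]
  ring

lemma inner_smul (c : ℝ) (a : Fin d → ℂ) :
    (star ((c:ℂ) • a) ⬝ᵥ ((c:ℂ) • a)).re = c^2 * (star a ⬝ᵥ a).re := by
  rw [star_smul, smul_dotProduct, dotProduct_smul]
  simp only [star_trivial, RCLike.star_def, Complex.conj_ofReal, smul_eq_mul, ← mul_assoc,
    ← Complex.ofReal_mul, Complex.re_ofReal_mul]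
  ring

lemma inner_pos {a : Fin d → ℂ} (ha : a ≠ 0) : 0 < (star a ⬝ᵥ a).re := by
  have h := Matrix.dotProduct_star_self_pos_iff.mpr ha
  exact (Complex.lt_def.mp h).1

lemma q_cont (A : Matrix (Fin d) (Fin d) ℂ) :
    Continuous fun a : Fin d → ℂ => (star a ⬝ᵥ A.mulVec a).re := by
  simp only [dotProduct, Matrix.mulVec, Pi.star_apply]
  fun_prop

lemma inner_cont :
    Continuous fun a : Fin d → ℂ => (star a ⬝ᵥ a).re := by
  simp only [dotProduct, Pi.star_apply]
  fun_prop

end Stmt4Aux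

theorem stmt4 {d : ℕ} (hd : 1 ≤ d)
    (H S : Matrix (Fin d) (Fin d) ℂ)
    (hH : H.IsHermitian) (hS : S.IsHermitian) (hSpd : S.PosDef)
    (CH CS : ℝ) (hCH : 0 < CH) (hCS : 0 < CS) :
    ContinuousOn
      (fun η : ℝ => ⨅ a : {a : Fin d → ℂ // a ≠ 0},
        (rq H a.1 + 2 * CH * η) / (rq S a.1 + 2 * CS * η)) (Set.Ici 0) ∧
    ∀ η₁ η₂ : ℝ, 0 ≤ η₁ → η₁ < η₂ →
      (⨅ a : {a : Fin d → ℂ // a ≠ 0},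
        (rq H a.1 + 2 * CH * η₂) / (rq S a.1 + 2 * CS * η₂)) < 0 →
      (⨅ a : {a : Fin d → ℂ // a ≠ 0},
        (rq H a.1 + 2 * CH * η₁) / (rq S a.1 + 2 * CS * η₁)) <
      (⨅ a : {a : Fin d → ℂ // a ≠ 0},
        (rq H a.1 + 2 * CH * η₂) / (rq S a.1 + 2 * CS * η₂)) := by
  classical
  set qH : (Fin d → ℂ) → ℝ := fun a => (star a ⬝ᵥ H.mulVec a).re with hqH
  set qS : (Fin d → ℂ) → ℝ := fun a => (star a ⬝ᵥ S.mulVec a).re with hqS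
  set qI : (Fin d → ℂ) → ℝ := fun a => (star a ⬝ᵥ a).re with hqI
  set K : Set (Fin d → ℂ) := {a | qI a = 1} with hK
  -- K is compact
  have hKclosed : IsClosed K := isClosed_eq Stmt4Aux.inner_cont continuous_const
  have hIsum : ∀ a : Fin d → ℂ, qI a = ∑ i, ‖a i‖ ^ 2 := by
    intro a
    simp only [hqI, dotProduct, Pi.star_apply, Complex.re_sum]
    refine Finset.sum_congr rfl fun i _ => ?_
    rw [RCLike.star_def, ← Complex.normSq_eq_conj_mul_self, Complex.ofReal_re,
      Complex.normSq_eq_norm_sq]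
  have hKsub : K ⊆ Metric.closedBall 0 1 := by
    intro a haK
    rw [Metric.mem_closedBall, dist_zero_right]
    refine (pi_norm_le_iff_of_nonneg zero_le_one).mpr fun i => ?_
    have h1 : ‖a i‖ ^ 2 ≤ 1 := by
      have := hIsum a
      rw [Set.mem_setOf_eq] at haK
      have hle : ‖a i‖ ^ 2 ≤ ∑ j, ‖a j‖ ^ 2 :=
        Finset.single_le_sum (f := fun j => ‖a j‖ ^ 2) (fun j _ => sq_nonneg _)
          (Finset.mem_univ i)
      nlinarith [haK]
    nlinarith [norm_nonneg (a i)]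
  have hKc : IsCompact K :=
    (Metric.isCompact_of_isClosed_isBounded hKclosed
      (Metric.isBounded_closedBall.subset hKsub))
  -- K is nonempty
  have hKne : K.Nonempty := by
    refine ⟨Pi.single ⟨0, hd⟩ 1, ?_⟩
    rw [Set.mem_setOf_eq, hIsum]
    rw [Finset.sum_eq_single (⟨0, hd⟩ : Fin d)]
    · simp
    · intro j _ hj; simp [Pi.single_apply, hj]
    · simp
  -- elements of K are nonzero
  have hK0 : ∀ a ∈ K, a ≠ 0 := by
    rintro a haK rfl
    rw [Set.mem_setOf_eq] at haK
    simp [hqI] at haK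
  -- rq on K
  have hrqK : ∀ A : Matrix (Fin d) (Fin d) ℂ, ∀ a ∈ K, rq A a = (star a ⬝ᵥ A.mulVec a).re := by
    intro A a haK
    rw [Set.mem_setOf_eq] at haK
    rw [rq, show (star a ⬝ᵥ a).re = qI a from rfl, haK, div_one]
  -- qS positive on nonzero vectors
  have hqSpos : ∀ a : Fin d → ℂ, a ≠ 0 → 0 < qS a := fun a ha => hSpd.re_dotProduct_pos ha
  -- minimizer of qS on K
  obtain ⟨a₀, ha₀K, ha₀min⟩ := hKc.exists_isMinOn hKne (Stmt4Aux.q_cont S).continuousOn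
  have hm : 0 < qS a₀ := hqSpos a₀ (hK0 a₀ ha₀K)
  -- normalization map
  have hnorm : ∀ a : Fin d → ℂ, a ≠ 0 →
      ∃ b ∈ K, (∀ A : Matrix (Fin d) (Fin d) ℂ, (star b ⬝ᵥ A.mulVec b).re = rq A a) := by
    intro a ha
    have hI : 0 < qI a := Stmt4Aux.inner_pos ha
    refine ⟨(((Real.sqrt (qI a))⁻¹ : ℝ) : ℂ) • a, ?_, fun A => ?_⟩
    · rw [Set.mem_setOf_eq, show qI _ = _ from Stmt4Aux.inner_smul _ a]
      rw [inv_pow, Real.sq_sqrt hI.le]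
      exact inv_mul_cancel₀ hI.ne'
    · rw [Stmt4Aux.q_smul, inv_pow, Real.sq_sqrt hI.le, rq, div_eq_inv_mul]
  -- the global parametric family
  set F : ℝ → (Fin d → ℂ) → ℝ := fun η a =>
    (qH a + 2 * CH * max η 0) / (max (qS a) (qS a₀) + 2 * CS * max η 0) with hF
  have hden : ∀ η : ℝ, ∀ a : Fin d → ℂ, 0 < max (qS a) (qS a₀) + 2 * CS * max η 0 := by
    intro η a
    have h1 : qS a₀ ≤ max (qS a) (qS a₀) := le_max_right _ _
    have h2 : (0:ℝ) ≤ max η 0 := le_max_right _ _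
    nlinarith
  -- max trick is trivial on K
  have hmaxK : ∀ a ∈ K, max (qS a) (qS a₀) = qS a := fun a haK => max_eq_left (ha₀min haK)
  -- key identification of the infimum
  have hEq : ∀ η ∈ Set.Ici (0:ℝ),
      (⨅ a : {a : Fin d → ℂ // a ≠ 0},
        (rq H a.1 + 2 * CH * η) / (rq S a.1 + 2 * CS * η)) = sInf (F η '' K) := by
    intro η hη
    rw [Set.mem_Ici] at hη
    rw [iInf]
    congr 1
    ext x
    constructor
    · rintro ⟨⟨a, ha⟩, rfl⟩
      obtain ⟨b, hbK, hb⟩ := hnorm a ha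
      refine ⟨b, hbK, ?_⟩
      rw [hF]
      dsimp only
      rw [max_eq_left hη, hmaxK b hbK, show qH b = rq H a from hb H,
        show qS b = rq S a from hb S]
    · rintro ⟨a, haK, rfl⟩
      refine ⟨⟨a, hK0 a haK⟩, ?_⟩
      dsimp only
      rw [hrqK H a haK, hrqK S a haK, hF]
      dsimp only
      rw [max_eq_left hη, hmaxK a haK]
  -- continuity of the family
  have hFcont : Continuous (Function.uncurry F) := by
    have hmax : Continuous fun p : ℝ × (Fin d → ℂ) => max p.1 0 :=
      continuous_fst.max continuous_const
    refine Continuous.div ?_ ?_ fun p => (hden p.1 p.2).ne'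
    · exact ((Stmt4Aux.q_cont H).comp continuous_snd).add (continuous_const.mul hmax)
    · exact (((Stmt4Aux.q_cont S).comp continuous_snd).max continuous_const).add
        (continuous_const.mul hmax)
  have hGcont : Continuous fun η => sInf (F η '' K) := hKc.continuous_sInf hFcont
  constructor
  · exact (hGcont.continuousOn).congr hEq
  · intro η₁ η₂ hη₁ h12 hneg
    have hη₂ : (0:ℝ) ≤ η₂ := hη₁.trans h12.le
    rw [hEq η₁ hη₁, hEq η₂ hη₂]
    rw [hEq η₂ hη₂] at hneg
    have hc2 : ContinuousOn (F η₂) K :=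
      (hFcont.comp (Continuous.prodMk_right η₂)).continuousOn
    obtain ⟨b, hbK, hbmin⟩ := hKc.exists_isMinOn hKne hc2
    have hbdd : ∀ η, BddBelow (F η '' K) := by
      intro η
      exact hKc.bddBelow_image (hFcont.comp (Continuous.prodMk_right η)).continuousOn
    have hsInf2 : sInf (F η₂ '' K) = F η₂ b := by
      refine le_antisymm (csInf_le (hbdd η₂) ⟨b, hbK, rfl⟩) ?_
      refine le_csInf (hKne.image _) ?_
      rintro x ⟨a, haK, rfl⟩
      exact hbmin haK
    rw [hsInf2] at hneg ⊢
    have h1 : sInf (F η₁ '' K) ≤ F η₁ b := csInf_le (hbdd η₁) ⟨b, hbK, rfl⟩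
    refine h1.trans_lt ?_
    have hs : 0 < qS b := hqSpos b (hK0 b hbK)
    have hd1 : 0 < qS b + 2 * CS * η₁ := by nlinarith
    have hd2 : 0 < qS b + 2 * CS * η₂ := by nlinarith
    have hFb2 : F η₂ b = (qH b + 2 * CH * η₂) / (qS b + 2 * CS * η₂) := by
      rw [hF]; dsimp only; rw [max_eq_left hη₂, hmaxK b hbK]
    have hFb1 : F η₁ b = (qH b + 2 * CH * η₁) / (qS b + 2 * CS * η₁) := by
      rw [hF]; dsimp only; rw [max_eq_left hη₁, hmaxK b hbK]
    rw [hFb2] at hneg ⊢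
    rw [hFb1]
    have hnum : qH b + 2 * CH * η₂ < 0 := by
      by_contra hnn
      push_neg at hnn
      exact absurd (div_nonneg hnn hd2.le) (not_le.mpr hneg)
    have hHb : qH b < 0 := by nlinarith
    rw [div_lt_div_iff₀ hd1 hd2]
    nlinarith [mul_pos (sub_pos.mpr h12) (show 0 < CH * qS b - CS * qH b by nlinarith)]
end

section
/- Let E_g be a real number and set ε_K = (inf_{a ≠ 0} ⟨H⟩(a)/⟨S⟩(a)) − E_g. If ε > ε_K and E_g + ε < 0, then there exists exactly one η > 0 such that inf_{a ≠ 0} E′(η, a) = E_g + ε. -/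
open Matrix
open scoped ComplexOrder

section Stmt5Aux

variable {d : ℕ}

/-- Decomposition of the quadratic form via the spectral theorem. -/
lemma stmt5_aux_quad_decomp {A : Matrix (Fin d) (Fin d) ℂ} (hA : A.IsHermitian) (a : Fin d → ℂ) :
    (star a ⬝ᵥ A *ᵥ a).re =
      ∑ i, hA.eigenvalues i *
        Complex.normSq ((star (hA.eigenvectorUnitary : Matrix (Fin d) (Fin d) ℂ) *ᵥ a) i) ∧
    (star a ⬝ᵥ a).re =
      ∑ i, Complex.normSq ((star (hA.eigenvectorUnitary : Matrix (Fin d) (Fin d) ℂ) *ᵥ a) i) := by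
  set U : Matrix (Fin d) (Fin d) ℂ := (hA.eigenvectorUnitary : Matrix (Fin d) (Fin d) ℂ) with hU
  have hUU : U * star U = 1 := by
    rw [hU]; exact mem_unitaryGroup_iff.mp hA.eigenvectorUnitary.2
  set b : Fin d → ℂ := star U *ᵥ a with hb
  have hsb : star b = star a ᵥ* U := by
    rw [hb, star_mulVec]
    simp [star_eq_conjTranspose]
  have key : ∀ i, star (b i) * b i = (Complex.normSq (b i) : ℂ) := by
    intro i
    rw [Complex.star_def, mul_comm, Complex.mul_conj]
  constructor
  · have h1 : star a ⬝ᵥ A *ᵥ a =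
        star b ⬝ᵥ (Matrix.diagonal (RCLike.ofReal ∘ hA.eigenvalues)) *ᵥ b := by
      conv_lhs => rw [hA.spectral_theorem, Unitary.conjStarAlgAut_apply]
      rw [← mulVec_mulVec, ← mulVec_mulVec, dotProduct_mulVec, ← hsb]
    rw [h1]
    have h2 : star b ⬝ᵥ (Matrix.diagonal (RCLike.ofReal ∘ hA.eigenvalues)) *ᵥ b
        = ∑ i, (hA.eigenvalues i : ℂ) * (Complex.normSq (b i) : ℂ) := by
      simp only [dotProduct, mulVec_diagonal, Function.comp_apply, Pi.star_apply]
      congr 1; funext i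
      rw [mul_left_comm, key i]
      norm_num
    rw [h2, Complex.re_sum]
    norm_num
  · have h1 : star a ⬝ᵥ a = star b ⬝ᵥ b := by
      rw [hsb, hb, ← dotProduct_mulVec, mulVec_mulVec, hUU, one_mulVec]
    rw [h1]
    simp only [dotProduct, Pi.star_apply, key]
    rw [Complex.re_sum]
    norm_num

lemma stmt5_aux_quad_lower {A : Matrix (Fin d) (Fin d) ℂ} (hA : A.IsHermitian) {i0 : Fin d}
    (hmin : ∀ i, hA.eigenvalues i0 ≤ hA.eigenvalues i) (a : Fin d → ℂ) :
    hA.eigenvalues i0 * (star a ⬝ᵥ a).re ≤ (star a ⬝ᵥ A *ᵥ a).re := by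
  obtain ⟨h1, h2⟩ := stmt5_aux_quad_decomp hA a
  rw [h1, h2, Finset.mul_sum]
  exact Finset.sum_le_sum fun i _ =>
    mul_le_mul_of_nonneg_right (hmin i) (Complex.normSq_nonneg _)

lemma stmt5_aux_quad_upper {A : Matrix (Fin d) (Fin d) ℂ} (hA : A.IsHermitian) {i1 : Fin d}
    (hmax : ∀ i, hA.eigenvalues i ≤ hA.eigenvalues i1) (a : Fin d → ℂ) :
    (star a ⬝ᵥ A *ᵥ a).re ≤ hA.eigenvalues i1 * (star a ⬝ᵥ a).re := by
  obtain ⟨h1, h2⟩ := stmt5_aux_quad_decomp hA a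
  rw [h1, h2, Finset.mul_sum]
  exact Finset.sum_le_sum fun i _ =>
    mul_le_mul_of_nonneg_right (hmax i) (Complex.normSq_nonneg _)

lemma stmt5_aux_eigen_exists {A : Matrix (Fin d) (Fin d) ℂ} (hA : A.IsHermitian) (i0 : Fin d) :
    ∃ a : Fin d → ℂ, a ≠ 0 ∧ (star a ⬝ᵥ A *ᵥ a).re = hA.eigenvalues i0 ∧
      (star a ⬝ᵥ a).re = 1 := by
  obtain ⟨h1, h2⟩ := stmt5_aux_quad_decomp hA ⇑(hA.eigenvectorBasis i0)
  rw [hA.star_eigenvectorUnitary_mulVec i0] at h1 h2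
  have hn : (star ⇑(hA.eigenvectorBasis i0) ⬝ᵥ ⇑(hA.eigenvectorBasis i0)).re = 1 := by
    rw [h2]; simp [Pi.single_apply, apply_ite Complex.normSq]
  refine ⟨_, ?_, ?_, hn⟩
  · intro h
    rw [h] at hn
    simp at hn
  · rw [h1]; simp [Pi.single_apply, apply_ite Complex.normSq]

lemma stmt5_aux_norm_re_pos (a : Fin d → ℂ) (ha : a ≠ 0) : 0 < (star a ⬝ᵥ a).re := by
  have h : (star a ⬝ᵥ a).re = ∑ i, Complex.normSq (a i) := by
    simp only [dotProduct, Pi.star_apply, Complex.star_def, Complex.re_sum]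
    congr 1; funext i
    rw [mul_comm, Complex.mul_conj]
    norm_num
  rw [h]
  obtain ⟨i, hi⟩ : ∃ i, a i ≠ 0 := by
    by_contra hc; push_neg at hc; exact ha (funext hc)
  exact Finset.sum_pos' (fun j _ => Complex.normSq_nonneg _)
    ⟨i, Finset.mem_univ i, Complex.normSq_pos.2 hi⟩

end Stmt5Aux

theorem stmt5 {d : ℕ} (hd : 1 ≤ d)
    (H S : Matrix (Fin d) (Fin d) ℂ)
    (hH : H.IsHermitian) (hS : S.IsHermitian) (hSpd : S.PosDef)
    (CH CS Eg ε : ℝ) (hCH : 0 < CH) (hCS : 0 < CS)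
    (hεK : ε > (⨅ a : {a : Fin d → ℂ // a ≠ 0}, rq H a.1 / rq S a.1) - Eg)
    (hneg : Eg + ε < 0) :
    ∃! η : ℝ, 0 < η ∧
      (⨅ a : {a : Fin d → ℂ // a ≠ 0},
        (rq H a.1 + 2 * CH * η) / (rq S a.1 + 2 * CS * η)) = Eg + ε := by
  have hdne : Nonempty (Fin d) := Fin.pos_iff_nonempty.mp hd
  set E := Eg + ε with hE
  have hEneg : E < 0 := hneg
  have hsm : ((E : ℂ) • S).IsHermitian := by
    show ((E : ℂ) • S)ᴴ = (E : ℂ) • S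
    rw [conjTranspose_smul, hS.eq, Complex.star_def, Complex.conj_ofReal]
  have hM0 : (H - (E : ℂ) • S).IsHermitian := hH.sub hsm
  obtain ⟨i0, -, hi0⟩ := Finset.exists_min_image Finset.univ hM0.eigenvalues
    ⟨Classical.arbitrary (Fin d), Finset.mem_univ _⟩
  set μ := hM0.eigenvalues i0 with hμdef
  have hmin : ∀ i, μ ≤ hM0.eigenvalues i := fun i => hi0 i (Finset.mem_univ i)
  obtain ⟨i1, -, hi1⟩ := Finset.exists_max_image Finset.univ hS.eigenvalues
    ⟨Classical.arbitrary (Fin d), Finset.mem_univ _⟩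
  set ν := hS.eigenvalues i1 with hνdef
  have hmax : ∀ i, hS.eigenvalues i ≤ ν := fun i => hi1 i (Finset.mem_univ i)
  have hQS : ∀ a : Fin d → ℂ, a ≠ 0 → 0 < (star a ⬝ᵥ S *ᵥ a).re := by
    intro a ha
    simpa using hSpd.re_dotProduct_pos ha
  have hrqS_pos : ∀ a : Fin d → ℂ, a ≠ 0 → 0 < rq S a := fun a ha =>
    div_pos (hQS a ha) (stmt5_aux_norm_re_pos a ha)
  have hrqS_le : ∀ a : Fin d → ℂ, a ≠ 0 → rq S a ≤ ν := by
    intro a ha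
    rw [rq, div_le_iff₀ (stmt5_aux_norm_re_pos a ha)]
    exact stmt5_aux_quad_upper hS hmax a
  have hrqM0_ge : ∀ a : Fin d → ℂ, a ≠ 0 → μ ≤ rq (H - (E : ℂ) • S) a := by
    intro a ha
    rw [rq, le_div_iff₀ (stmt5_aux_norm_re_pos a ha)]
    exact stmt5_aux_quad_lower hM0 hmin a
  have hrq_sub : ∀ a : Fin d → ℂ, a ≠ 0 →
      rq (H - (E : ℂ) • S) a = rq H a - E * rq S a := by
    intro a ha
    have hq : (star a ⬝ᵥ (H - (E : ℂ) • S) *ᵥ a).re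
        = (star a ⬝ᵥ H *ᵥ a).re - E * (star a ⬝ᵥ S *ᵥ a).re := by
      rw [sub_mulVec, dotProduct_sub, Complex.sub_re, smul_mulVec, dotProduct_smul]
      simp [smul_eq_mul, Complex.mul_re]
    rw [rq, rq, rq, hq, sub_div, mul_div_assoc]
  obtain ⟨a0, ha0, hQa0, hna0⟩ := stmt5_aux_eigen_exists hM0 i0
  have hrqa0 : rq (H - (E : ℂ) • S) a0 = μ := by rw [rq, hQa0, hna0, div_one]
  set c := 2 * (CH - E * CS) with hc_def
  have hc : 0 < c := by nlinarith [mul_pos (neg_pos.2 hEneg) hCS]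
  have hne : Nonempty {a : Fin d → ℂ // a ≠ 0} := ⟨⟨a0, ha0⟩⟩
  have hinf_lt : (⨅ a : {a : Fin d → ℂ // a ≠ 0}, rq H a.1 / rq S a.1) < E := by
    rw [hE]; linarith
  obtain ⟨x, hx⟩ := exists_lt_of_ciInf_lt hinf_lt
  have hμneg : μ < 0 := by
    have h1 : rq H x.1 < E * rq S x.1 := (div_lt_iff₀ (hrqS_pos x.1 x.2)).mp hx
    have h2 := hrqM0_ge x.1 x.2
    rw [hrq_sub x.1 x.2] at h2
    linarith
  have key : ∀ (η : ℝ), 0 < η → ∀ a : Fin d → ℂ, a ≠ 0 →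
      (rq H a + 2 * CH * η) / (rq S a + 2 * CS * η)
        = E + (rq (H - (E : ℂ) • S) a + c * η) / (rq S a + 2 * CS * η) := by
    intro η hη a ha
    have hden : (0:ℝ) < rq S a + 2 * CS * η := by
      have := hrqS_pos a ha; positivity
    rw [hrq_sub a ha, hc_def]
    rw [div_eq_iff hden.ne', add_mul, div_mul_cancel₀ _ hden.ne']
    ring
  have hden_pos : ∀ (η : ℝ), 0 < η → ∀ a : Fin d → ℂ, a ≠ 0 →
      (0:ℝ) < rq S a + 2 * CS * η := by
    intro η hη a ha
    have := hrqS_pos a ha; positivity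
  have hbdd : ∀ (η : ℝ), 0 < η → BddBelow (Set.range fun x : {a : Fin d → ℂ // a ≠ 0} =>
      (rq H x.1 + 2 * CH * η) / (rq S x.1 + 2 * CS * η)) := by
    intro η hη
    refine ⟨E + min ((μ + c * η) / (2 * CS * η)) 0, ?_⟩
    rintro y ⟨x, rfl⟩
    dsimp only
    rw [key η hη x.1 x.2]
    have hm := hrqM0_ge x.1 x.2
    have hd1 : (0:ℝ) < 2 * CS * η := by positivity
    have hd2 : 2 * CS * η ≤ rq S x.1 + 2 * CS * η := by linarith [hrqS_pos x.1 x.2]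
    have hd3 : (0:ℝ) < rq S x.1 + 2 * CS * η := hden_pos η hη x.1 x.2
    have hmain : min ((μ + c * η) / (2 * CS * η)) 0
        ≤ (rq (H - (E : ℂ) • S) x.1 + c * η) / (rq S x.1 + 2 * CS * η) := by
      rcases le_or_gt 0 (rq (H - (E : ℂ) • S) x.1 + c * η) with h | h
      · exact le_trans (min_le_right _ _) (div_nonneg h hd3.le)
      · refine le_trans (min_le_left _ _) ?_
        rw [div_le_div_iff₀ hd1 hd3]
        nlinarith
    linarith
  set η₀ := -μ / c with hη₀def
  have hη₀pos : 0 < η₀ := div_pos (neg_pos.2 hμneg) hc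
  have hcη₀ : c * η₀ = -μ := by
    rw [hη₀def]; field_simp
  have hlow : ∀ x : {a : Fin d → ℂ // a ≠ 0},
      E ≤ (rq H x.1 + 2 * CH * η₀) / (rq S x.1 + 2 * CS * η₀) := by
    intro x
    rw [key η₀ hη₀pos x.1 x.2]
    have hm := hrqM0_ge x.1 x.2
    have hd3 : (0:ℝ) < rq S x.1 + 2 * CS * η₀ := hden_pos η₀ hη₀pos x.1 x.2
    have h0 : 0 ≤ (rq (H - (E : ℂ) • S) x.1 + c * η₀) / (rq S x.1 + 2 * CS * η₀) :=
      div_nonneg (by linarith) hd3.le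
    linarith
  have hval : (rq H a0 + 2 * CH * η₀) / (rq S a0 + 2 * CS * η₀) = E := by
    rw [key η₀ hη₀pos a0 ha0, hrqa0, show μ + c * η₀ = 0 by linarith]
    simp
  have hinf₀ : (⨅ x : {a : Fin d → ℂ // a ≠ 0},
      (rq H x.1 + 2 * CH * η₀) / (rq S x.1 + 2 * CS * η₀)) = E := by
    refine le_antisymm ?_ (le_ciInf hlow)
    rw [← hval]
    exact ciInf_le (hbdd η₀ hη₀pos) ⟨a0, ha0⟩
  refine ⟨η₀, ⟨hη₀pos, hinf₀⟩, ?_⟩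
  rintro η ⟨hηpos, hinfη⟩
  have h1 : ¬ (μ + c * η < 0) := by
    intro hlt
    have hd3 : (0:ℝ) < rq S a0 + 2 * CS * η := hden_pos η hηpos a0 ha0
    have hFx : (rq H a0 + 2 * CH * η) / (rq S a0 + 2 * CS * η) < E := by
      rw [key η hηpos a0 ha0, hrqa0]
      have := div_neg_of_neg_of_pos hlt hd3
      linarith
    have hle : (⨅ x : {a : Fin d → ℂ // a ≠ 0},
        (rq H x.1 + 2 * CH * η) / (rq S x.1 + 2 * CS * η))
          ≤ (rq H a0 + 2 * CH * η) / (rq S a0 + 2 * CS * η) :=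
      ciInf_le (hbdd η hηpos) ⟨a0, ha0⟩
    rw [hinfη] at hle
    linarith
  have hν_pos : 0 < ν := lt_of_lt_of_le (hrqS_pos a0 ha0) (hrqS_le a0 ha0)
  have h2 : ¬ (0 < μ + c * η) := by
    intro hlt
    have hνd : (0:ℝ) < ν + 2 * CS * η := by positivity
    have hδ : 0 < (μ + c * η) / (ν + 2 * CS * η) := div_pos hlt hνd
    have hgood : E + (μ + c * η) / (ν + 2 * CS * η)
        ≤ ⨅ x : {a : Fin d → ℂ // a ≠ 0},
          (rq H x.1 + 2 * CH * η) / (rq S x.1 + 2 * CS * η) := by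
      refine le_ciInf ?_
      intro x
      rw [key η hηpos x.1 x.2]
      have hm := hrqM0_ge x.1 x.2
      have hd3 : (0:ℝ) < rq S x.1 + 2 * CS * η := hden_pos η hηpos x.1 x.2
      have hd4 : rq S x.1 + 2 * CS * η ≤ ν + 2 * CS * η := by linarith [hrqS_le x.1 x.2]
      have hq : (μ + c * η) / (ν + 2 * CS * η)
          ≤ (rq (H - (E : ℂ) • S) x.1 + c * η) / (rq S x.1 + 2 * CS * η) := by
        rw [div_le_div_iff₀ hνd hd3]
        nlinarith
      linarith
    rw [hinfη] at hgood
    linarith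
  have h3 : μ + c * η = 0 := le_antisymm (not_lt.mp h2) (not_lt.mp h1)
  rw [hη₀def, eq_div_iff hc.ne']
  linarith
end

section
/- For every integer n ≥ 1, every real τ > 0, every real E₀, and every complex Hermitian matrix H, the Gaussian-power operator satisfies ‖(H − E₀·I)ⁿ · exp(−(τ²/2)·(H − E₀·I)²)‖₂ ≤ (n/(e·τ²))^{n/2}, where e is Euler's number. -/
open Matrix

set_option maxHeartbeats 1000000
set_option synthInstance.maxHeartbeats 400000

lemma scalar_bound (n : ℕ) (hn : 1 ≤ n) (τ : ℝ) (hτ : 0 < τ) (x : ℝ) :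
    |x| ^ n * Real.exp (-(τ ^ 2 / 2) * x ^ 2)
      ≤ ((n : ℝ) / (Real.exp 1 * τ ^ 2)) ^ ((n : ℝ) / 2) := by
  have hn0 : (0:ℝ) < n := by exact_mod_cast hn
  have hτ2 : (0:ℝ) < τ ^ 2 := by positivity
  have h1 : |x| ^ n = (x ^ 2) ^ ((n : ℝ) / 2) := by
    rw [← sq_abs, ← Real.rpow_natCast (|x|) 2, ← Real.rpow_mul (abs_nonneg x),
      show ((2:ℕ):ℝ) * ((n:ℝ)/2) = ((n:ℕ):ℝ) by push_cast; ring,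
      Real.rpow_natCast]
  have h2 : Real.exp (-(τ ^ 2 / 2) * x ^ 2)
      = (Real.exp (-(τ ^ 2 * x ^ 2) / n)) ^ ((n : ℝ) / 2) := by
    rw [← Real.exp_mul]
    congr 1
    field_simp
  rw [h1, h2, ← Real.mul_rpow (by positivity) (Real.exp_pos _).le]
  apply Real.rpow_le_rpow (by positivity) _ (by positivity)
  set t : ℝ := τ ^ 2 * x ^ 2 / n with ht
  have ht0 : 0 ≤ t := by positivity
  have hx2 : x ^ 2 = n * t / τ ^ 2 := by
    rw [ht]; field_simp
  have hte : t * Real.exp (-t) ≤ Real.exp (-1) := by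
    have h3 : t ≤ Real.exp (t - 1) := by
      have := Real.add_one_le_exp (t - 1)
      linarith
    calc t * Real.exp (-t) ≤ Real.exp (t - 1) * Real.exp (-t) := by
          exact mul_le_mul_of_nonneg_right h3 (Real.exp_pos _).le
      _ = Real.exp (-1) := by rw [← Real.exp_add]; ring_nf
  have harg : -(τ ^ 2 * x ^ 2) / n = -t := by rw [ht]; ring
  have hkey : x ^ 2 * Real.exp (-(τ ^ 2 * x ^ 2) / n)
      = ((n : ℝ) / τ ^ 2) * (t * Real.exp (-t)) := by
    rw [harg, hx2]; ring
  rw [hkey]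
  calc ((n : ℝ) / τ ^ 2) * (t * Real.exp (-t))
      ≤ ((n : ℝ) / τ ^ 2) * Real.exp (-1) :=
        mul_le_mul_of_nonneg_left hte (by positivity)
    _ = (n : ℝ) / (Real.exp 1 * τ ^ 2) := by
        rw [Real.exp_neg, div_mul_eq_mul_div, ← div_eq_mul_inv, div_div,
          mul_comm (Real.exp 1) (τ ^ 2)]

theorem stmt12 {d : ℕ} (hd : 1 ≤ d) (n : ℕ) (hn : 1 ≤ n)
    (τ E₀ : ℝ) (hτ : 0 < τ)
    (H : Matrix (Fin d) (Fin d) ℂ) (hH : H.IsHermitian) :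
    specNorm ((H - (E₀ : ℂ) • (1 : Matrix (Fin d) (Fin d) ℂ)) ^ n *
        NormedSpace.exp
          (-(((τ : ℂ) ^ 2 / 2) • (H - (E₀ : ℂ) • (1 : Matrix (Fin d) (Fin d) ℂ)) ^ 2)))
      ≤ ((n : ℝ) / (Real.exp 1 * τ ^ 2)) ^ ((n : ℝ) / 2) := by
  set A : Matrix (Fin d) (Fin d) ℂ := H - (E₀ : ℂ) • 1 with hA
  have hAh : A.IsHermitian := by
    apply hH.sub
    simp [Matrix.IsHermitian, Matrix.conjTranspose_smul]
  set φ := Matrix.toEuclideanCLM (n := Fin d) (𝕜 := ℂ) with hφ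
  set T := φ A with hT
  have hTsa : _root_.IsSelfAdjoint T := by
    rw [_root_.IsSelfAdjoint, hT, ← map_star]
    exact congrArg φ hAh
  have hφl : IsLinearMap ℂ φ := ⟨_root_.map_add φ, _root_.map_smul φ⟩
  have hφc : Continuous φ := LinearMap.continuous_of_finiteDimensional (hφl.mk' φ)
  have hmap : φ (A ^ n * NormedSpace.exp (-(((τ : ℂ) ^ 2 / 2) • A ^ 2)))
      = T ^ n * NormedSpace.exp (-(((τ : ℂ) ^ 2 / 2) • T ^ 2)) := by
    have hme : φ (NormedSpace.exp (-(((τ : ℂ) ^ 2 / 2) • A ^ 2)))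
        = NormedSpace.exp (φ (-(((τ : ℂ) ^ 2 / 2) • A ^ 2))) := by
      letI : SeminormedRing (Matrix (Fin d) (Fin d) ℂ) := Matrix.linftyOpSemiNormedRing
      letI : NormedRing (Matrix (Fin d) (Fin d) ℂ) := Matrix.linftyOpNormedRing
      letI : NormedAlgebra ℂ (Matrix (Fin d) (Fin d) ℂ) := Matrix.linftyOpNormedAlgebra
      letI : NormedAlgebra ℚ (Matrix (Fin d) (Fin d) ℂ) := NormedAlgebra.restrictScalars ℚ ℂ _
      exact NormedSpace.map_exp φ hφc _
    rw [_root_.map_mul, _root_.map_pow, hme, ← hT]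
    congr 2
    rw [map_neg, _root_.map_smul, _root_.map_pow]
  rw [specNorm, ← hφ, hmap]
  have hsc : -(((τ : ℂ) ^ 2 / 2) • T ^ 2) = (-(τ ^ 2 / 2) : ℝ) • T ^ 2 := by
    have hcs : ((-(τ ^ 2 / 2) : ℝ) : ℂ) • T ^ 2 = ((-(τ ^ 2 / 2) : ℝ)) • T ^ 2 := rfl
    rw [← hcs, show (((-(τ ^ 2 / 2) : ℝ)) : ℂ) = -((τ : ℂ) ^ 2 / 2) by push_cast; ring]
    exact (neg_smul _ _).symm
  have hexp : NormedSpace.exp (-(((τ : ℂ) ^ 2 / 2) • T ^ 2))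
      = NormedSpace.exp ((-(τ ^ 2 / 2) : ℝ) • T ^ 2) := by
    rw [hsc]
  rw [hexp]
  set f : ℝ → ℝ := fun x => x ^ n * Real.exp (-(τ ^ 2 / 2) * x ^ 2) with hf
  have hcfc : T ^ n * NormedSpace.exp ((-(τ ^ 2 / 2) : ℝ) • T ^ 2) = cfc f T := by
    have h1 : cfc (fun x : ℝ => x ^ n) T = T ^ n := cfc_pow_id (R := ℝ) T n
    have h2 : cfc (fun x : ℝ => Real.exp (-(τ ^ 2 / 2) * x ^ 2)) T
        = NormedSpace.exp ((-(τ ^ 2 / 2) : ℝ) • T ^ 2) := by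
      have hcomp : (fun x : ℝ => Real.exp (-(τ ^ 2 / 2) * x ^ 2))
          = Real.exp ∘ (fun x : ℝ => -(τ ^ 2 / 2) * x ^ 2) := rfl
      rw [hcomp, cfc_comp Real.exp (fun x : ℝ => -(τ ^ 2 / 2) * x ^ 2) T hTsa
        (by fun_prop) (by fun_prop)]
      have h3 : cfc (fun x : ℝ => -(τ ^ 2 / 2) * x ^ 2) T
          = (-(τ ^ 2 / 2) : ℝ) • T ^ 2 := by
        rw [show (fun x : ℝ => -(τ ^ 2 / 2) * x ^ 2)
            = (fun x : ℝ => (-(τ ^ 2 / 2) : ℝ) • x ^ 2) from rfl]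
        rw [cfc_smul (-(τ^2/2) : ℝ) (fun x : ℝ => x ^ 2) T, cfc_pow_id (R := ℝ) T 2]
      rw [h3]
      have hc : _root_.IsSelfAdjoint ((τ : ℂ) ^ 2 / 2) := by
        rw [_root_.IsSelfAdjoint,
          show ((τ : ℂ) ^ 2 / 2) = ((τ ^ 2 / 2 : ℝ) : ℂ) by push_cast; ring]
        exact Complex.conj_ofReal _
      have hT2 : _root_.IsSelfAdjoint ((-(τ ^ 2 / 2) : ℝ) • T ^ 2) := by
        rw [← hsc]
        exact IsSelfAdjoint.neg (R := EuclideanSpace ℂ (Fin d) →L[ℂ] EuclideanSpace ℂ (Fin d))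
          (IsSelfAdjoint.smul (R := ℂ)
          (A := EuclideanSpace ℂ (Fin d) →L[ℂ] EuclideanSpace ℂ (Fin d))
          hc (hTsa.pow 2))
      exact CFC.real_exp_eq_normedSpace_exp hT2
    rw [hf, ← h1, ← h2,
      ← cfc_mul (fun x : ℝ => x ^ n) (fun x : ℝ => Real.exp (-(τ ^ 2 / 2) * x ^ 2)) T
        (by fun_prop) (by fun_prop)]
  rw [hcfc]
  apply norm_cfc_le (by positivity)
  intro x hx
  rw [Real.norm_eq_abs, hf]
  calc |x ^ n * Real.exp (-(τ ^ 2 / 2) * x ^ 2)|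
      = |x| ^ n * Real.exp (-(τ ^ 2 / 2) * x ^ 2) := by
        rw [abs_mul, abs_pow, abs_of_pos (Real.exp_pos _)]
    _ ≤ _ := scalar_bound n hn τ hτ x
end

section
/- For every natural number n and every real number y, ∫_{−∞}^{+∞} H_n(u) · e^{−u²} · e^{−i·y·u} du = √π · (−i·y)ⁿ · e^{−y²/4}, where the integral is over all of ℝ and the integrand is complex-valued. -/
/-- The `n`-th physicists' Hermite polynomial, obtained from Mathlib's probabilists'
Hermite polynomial `Polynomial.hermite` by `H_n(x) = 2^(n/2) · He_n(√2·x)`. -/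
noncomputable def physHermite (n : ℕ) (x : ℝ) : ℝ :=
  (2 : ℝ) ^ ((n : ℝ) / 2) * Polynomial.aeval (Real.sqrt 2 * x) (Polynomial.hermite n)

open MeasureTheory Polynomial Complex Filter Finset

/-- `physHermite n` as evaluation of a real polynomial. -/
noncomputable def physP (n : ℕ) : Polynomial ℝ :=
  Polynomial.C ((2 : ℝ) ^ ((n : ℝ) / 2)) *
    ((Polynomial.hermite n).map (Int.castRingHom ℝ)).comp
      (Polynomial.C (Real.sqrt 2) * Polynomial.X)

lemma physHermite_eq (n : ℕ) (x : ℝ) : physHermite n x = (physP n).eval x := by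
  simp [physHermite, physP, eval_comp, ← eval_map, aeval_def, eval₂_eq_eval_map]

lemma continuous_physHermite (n : ℕ) : Continuous (physHermite n) := by
  have : physHermite n = fun x => (physP n).eval x := funext (physHermite_eq n)
  rw [this]
  exact (physP n).continuous

lemma abs_pow_le (i : ℕ) (x : ℝ) : |x| ^ i ≤ 1 + |x| ^ (2 * i) := by
  rcases le_total (|x|) 1 with h | h
  · have : |x| ^ i ≤ 1 := pow_le_one₀ (abs_nonneg x) h
    nlinarith [pow_nonneg (abs_nonneg x) (2 * i)]
  · have : |x| ^ i ≤ |x| ^ (2 * i) :=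
      pow_le_pow_right₀ h (by omega)
    nlinarith

lemma integrable_pow_gauss (i : ℕ) :
    Integrable (fun x : ℝ => x ^ i * Real.exp (-x ^ 2)) := by
  have hg : Integrable (fun x : ℝ =>
      Real.exp (-(1 : ℝ) * x ^ 2) +
        (2 ^ i * (i.factorial : ℝ)) * Real.exp (-(1 / 2 : ℝ) * x ^ 2)) :=
    (integrable_exp_neg_mul_sq one_pos).add
      ((integrable_exp_neg_mul_sq (by norm_num : (0:ℝ) < 1/2)).const_mul _)
  refine hg.mono' ?_ ?_
  · exact (Continuous.mul (continuous_pow i)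
      (Real.continuous_exp.comp (continuous_pow 2).neg)).aestronglyMeasurable
  · filter_upwards with x
    have h1 : |x| ^ (2 * i) ≤ 2 ^ i * (i.factorial : ℝ) * Real.exp (x ^ 2 / 2) := by
      have := Real.pow_div_factorial_le_exp (x := x ^ 2 / 2) (by positivity) i
      have h2 : (x ^ 2 / 2) ^ i = |x| ^ (2 * i) / 2 ^ i := by
        rw [div_pow, pow_mul, _root_.sq_abs]
      have hfac : (0 : ℝ) < i.factorial := by positivity
      rw [h2, div_div] at this
      calc |x| ^ (2 * i) ≤ (2 ^ i * (i.factorial : ℝ)) * Real.exp (x ^ 2 / 2) := by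
            rw [div_le_iff₀ (by positivity)] at this
            linarith [this]
      _ = _ := rfl
    have hb : ‖x ^ i * Real.exp (-x ^ 2)‖ = |x| ^ i * Real.exp (-x ^ 2) := by
      rw [norm_mul, Real.norm_eq_abs, Real.norm_eq_abs, _root_.abs_pow,
        abs_of_pos (Real.exp_pos _)]
    rw [hb]
    have key : |x| ^ i * Real.exp (-x ^ 2) ≤
        (1 + |x| ^ (2 * i)) * Real.exp (-x ^ 2) :=
      mul_le_mul_of_nonneg_right (abs_pow_le i x) (Real.exp_pos _).le
    have key2 : (1 + |x| ^ (2 * i)) * Real.exp (-x ^ 2) ≤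
        Real.exp (-(1 : ℝ) * x ^ 2) +
          (2 ^ i * (i.factorial : ℝ)) * Real.exp (-(1 / 2 : ℝ) * x ^ 2) := by
      rw [add_mul, one_mul, neg_one_mul]
      have : |x| ^ (2 * i) * Real.exp (-x ^ 2) ≤
          (2 ^ i * (i.factorial : ℝ)) * Real.exp (-(1 / 2 : ℝ) * x ^ 2) := by
        calc |x| ^ (2 * i) * Real.exp (-x ^ 2)
            ≤ (2 ^ i * (i.factorial : ℝ) * Real.exp (x ^ 2 / 2)) * Real.exp (-x ^ 2) :=
              mul_le_mul_of_nonneg_right h1 (Real.exp_pos _).le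
          _ = (2 ^ i * (i.factorial : ℝ)) * Real.exp (-(1 / 2 : ℝ) * x ^ 2) := by
              rw [mul_assoc, ← Real.exp_add]; ring_nf
      linarith
    linarith

lemma integrable_physGauss (n : ℕ) :
    Integrable (fun u : ℝ => physHermite n u * Real.exp (-u ^ 2)) := by
  have heq : (fun u : ℝ => physHermite n u * Real.exp (-u ^ 2)) =
      fun u => ∑ i ∈ Finset.range ((physP n).natDegree + 1),
        (physP n).coeff i * (u ^ i * Real.exp (-u ^ 2)) := by
    funext u
    rw [physHermite_eq, Polynomial.eval_eq_sum_range, Finset.sum_mul]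
    simp [mul_assoc]
  rw [heq]
  exact integrable_finset_sum _ fun i _ => (integrable_pow_gauss i).const_mul _

lemma hasDerivAt_physHermite (n : ℕ) (x : ℝ) :
    HasDerivAt (physHermite n)
      (2 * x * physHermite n x - physHermite (n + 1) x) x := by
  set Q : ℕ → Polynomial ℝ := fun k => (Polynomial.hermite k).map (Int.castRingHom ℝ) with hQ
  have hval : ∀ k (t : ℝ), physHermite k t =
      (2 : ℝ) ^ ((k : ℝ) / 2) * (Q k).eval (Real.sqrt 2 * t) := by
    intro k t
    simp [physHermite, hQ, ← eval_map, aeval_def, eval₂_eq_eval_map]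
  have hder : ∀ k, (Q k).derivative = Polynomial.X * Q k - Q (k + 1) := by
    intro k
    have := Polynomial.hermite_succ k
    have : Polynomial.derivative (Polynomial.hermite k) =
        Polynomial.X * Polynomial.hermite k - Polynomial.hermite (k + 1) := by
      rw [Polynomial.hermite_succ]; ring
    rw [hQ]
    simp only [Polynomial.derivative_map, this, Polynomial.map_sub, Polynomial.map_mul,
      Polynomial.map_X]
  have h1 : HasDerivAt (fun t : ℝ => (Q n).eval (Real.sqrt 2 * t))
      ((Q n).derivative.eval (Real.sqrt 2 * x) * Real.sqrt 2) x := by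
    have hp := (Q n).hasDerivAt (Real.sqrt 2 * x)
    have hl : HasDerivAt (fun t : ℝ => Real.sqrt 2 * t) (Real.sqrt 2) x := by
      simpa using (hasDerivAt_id x).const_mul (Real.sqrt 2)
    exact hp.comp x hl
  have h2 : HasDerivAt (physHermite n)
      ((2 : ℝ) ^ ((n : ℝ) / 2) * ((Q n).derivative.eval (Real.sqrt 2 * x) * Real.sqrt 2)) x := by
    have : physHermite n = fun t => (2 : ℝ) ^ ((n : ℝ) / 2) * (Q n).eval (Real.sqrt 2 * t) :=
      funext fun t => hval n t
    rw [this]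
    exact h1.const_mul _
  convert h2 using 1
  rw [hder n]
  have hsqrt : Real.sqrt 2 * Real.sqrt 2 = 2 :=
    Real.mul_self_sqrt (by norm_num)
  have hpow : Real.sqrt 2 * (2 : ℝ) ^ ((n : ℝ) / 2) = (2 : ℝ) ^ ((((n + 1 : ℕ)) : ℝ) / 2) := by
    rw [show Real.sqrt 2 = (2 : ℝ) ^ ((1 : ℝ) / 2) from Real.sqrt_eq_rpow 2,
      ← Real.rpow_add (by norm_num)]
    push_cast
    ring_nf
  simp only [Polynomial.eval_sub, Polynomial.eval_mul, Polynomial.eval_X]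
  rw [hval n x, hval (n + 1) x, ← hpow]
  linear_combination (-(2 : ℝ) ^ ((n : ℝ) / 2) * x *
    Polynomial.eval (Real.sqrt 2 * x) (Q n)) * hsqrt

lemma hasDerivAt_physGauss (n : ℕ) (x : ℝ) :
    HasDerivAt (fun u : ℝ => physHermite n u * Real.exp (-u ^ 2))
      (-(physHermite (n + 1) x * Real.exp (-x ^ 2))) x := by
  have h1 := hasDerivAt_physHermite n x
  have h2 : HasDerivAt (fun u : ℝ => Real.exp (-u ^ 2)) (-(2 * x) * Real.exp (-x ^ 2)) x := by
    have : HasDerivAt (fun u : ℝ => -u ^ 2) (-(2 * x)) x := by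
      simpa using (hasDerivAt_pow 2 x).fun_neg
    simpa [mul_comm] using this.exp
  have := h1.fun_mul h2
  refine this.congr_deriv ?_
  have hrec : physHermite (n + 1) x = 2 * x * physHermite n x -
      (2 * x * physHermite n x - physHermite (n + 1) x) := by ring
  ring

theorem stmt14 (n : ℕ) (y : ℝ) :
    ∫ u : ℝ, (physHermite n u : ℂ) * Complex.exp (-(u : ℂ) ^ 2) *
        Complex.exp (-(Complex.I * (y : ℂ) * (u : ℂ)))
      = (Real.sqrt Real.pi : ℂ) * (-Complex.I * (y : ℂ)) ^ n *
        Complex.exp (-(y : ℂ) ^ 2 / 4) := by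
  induction n with
  | zero =>
    have h0 : ∀ u : ℝ, physHermite 0 u = 1 := by
      intro u; simp [physHermite]
    have := fourierIntegral_gaussian (b := 1) (by norm_num) (-(y : ℂ))
    simp only [neg_neg, one_mul, neg_sq] at this
    have heq : (∫ u : ℝ, (physHermite 0 u : ℂ) * Complex.exp (-(u : ℂ) ^ 2) *
        Complex.exp (-(Complex.I * (y : ℂ) * (u : ℂ))))
        = ∫ x : ℝ, Complex.exp (Complex.I * (-(y : ℂ)) * x) * Complex.exp (-1 * (x : ℂ) ^ 2) := by
      congr 1; funext u
      rw [h0 u]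
      push_cast
      rw [mul_comm]
      ring_nf
    rw [heq, this]
    have hpi : ((Real.sqrt Real.pi : ℝ) : ℂ) = ((Real.pi : ℂ) / 1) ^ (1 / 2 : ℂ) := by
      rw [div_one, Real.sqrt_eq_rpow, Complex.ofReal_cpow Real.pi_pos.le]
      norm_num
    rw [hpi]
    ring_nf
  | succ n ih =>
    set u : ℝ → ℂ := fun t => Complex.exp (-(Complex.I * (y : ℂ) * (t : ℂ))) with hu
    set v : ℝ → ℂ := fun t => ((physHermite n t * Real.exp (-t ^ 2) : ℝ) : ℂ) with hv
    set v' : ℝ → ℂ := fun t => -((physHermite (n + 1) t * Real.exp (-t ^ 2) : ℝ) : ℂ) with hv'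
    set u' : ℝ → ℂ := fun t => -(Complex.I * (y : ℂ)) * u t with hu'
    have hud : ∀ t : ℝ, HasDerivAt u (u' t) t := by
      intro t
      have hexp : HasDerivAt (fun s : ℝ => -(Complex.I * (y : ℂ) * (s : ℂ)))
          (-(Complex.I * (y : ℂ))) t := by
        have hof : HasDerivAt (fun s : ℝ => (s : ℂ)) 1 t := by
          simpa using (hasDerivAt_id t).ofReal_comp
        simpa [mul_comm] using ((hof.const_mul (Complex.I * (y : ℂ))).fun_neg)
      simpa [hu, hu', mul_comm] using hexp.cexp
    have hvd : ∀ t : ℝ, HasDerivAt v (v' t) t := by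
      intro t
      have := (hasDerivAt_physGauss n t).ofReal_comp
      simpa [hv, hv'] using this
    -- integrability facts
    have hnorm_u : ∀ t : ℝ, ‖u t‖ = 1 := by
      intro t
      simp [hu, Complex.norm_exp]
    have hmeas : ∀ k : ℕ, AEStronglyMeasurable
        (fun t : ℝ => u t * ((physHermite k t * Real.exp (-t ^ 2) : ℝ) : ℂ)) volume := by
      intro k
      apply Continuous.aestronglyMeasurable
      apply Continuous.mul
      · exact Complex.continuous_exp.comp
          ((continuous_const.mul Complex.continuous_ofReal).neg)
      · exact Complex.continuous_ofReal.comp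
          ((continuous_physHermite k).mul
            (Real.continuous_exp.comp (continuous_pow 2).neg))
    have hint : ∀ k : ℕ, Integrable
        (fun t : ℝ => u t * ((physHermite k t * Real.exp (-t ^ 2) : ℝ) : ℂ)) := by
      intro k
      refine (integrable_physGauss k).norm.mono' (hmeas k) ?_
      filter_upwards with t
      rw [norm_mul, hnorm_u t, one_mul]
      exact (Complex.norm_real _).le
    have huv' : Integrable (u * v') := by
      have := ((hint (n + 1)).neg)
      refine this.congr ?_
      filter_upwards with t
      simp [hv', Pi.mul_apply, mul_neg]
    have huv : Integrable (u * v) := (hint n).congr (by filter_upwards with t; rfl)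
    have hu'v : Integrable (u' * v) := by
      have := huv.const_mul (-(Complex.I * (y : ℂ)))
      refine this.congr ?_
      filter_upwards with t
      simp [hu', Pi.mul_apply, mul_assoc]
    have hibp := MeasureTheory.integral_mul_deriv_eq_deriv_mul_of_integrable
      (fun t _ => hud t) (fun t _ => hvd t) huv' hu'v huv
    -- hibp : ∫ u t * v' t = - ∫ u' t * v t  -- careful with orientation
    -- rewrite target integral
    have hcast : ∀ (k : ℕ) (t : ℝ), (physHermite k t : ℂ) * Complex.exp (-(t : ℂ) ^ 2) =
        ((physHermite k t * Real.exp (-t ^ 2) : ℝ) : ℂ) := by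
      intro k t
      push_cast [Complex.ofReal_exp]
      ring_nf
    have htarget : (∫ t : ℝ, (physHermite (n + 1) t : ℂ) * Complex.exp (-(t : ℂ) ^ 2) *
        Complex.exp (-(Complex.I * (y : ℂ) * (t : ℂ)))) = -∫ t : ℝ, u t * v' t := by
      rw [← integral_neg]
      congr 1; funext t
      rw [hcast (n + 1) t]
      simp [hu, hv', mul_comm]
    have hihs : (∫ t : ℝ, u' t * v t) =
        -(Complex.I * (y : ℂ)) * ∫ t : ℝ, (physHermite n t : ℂ) *
          Complex.exp (-(t : ℂ) ^ 2) * Complex.exp (-(Complex.I * (y : ℂ) * (t : ℂ))) := by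
      rw [← integral_const_mul]
      congr 1; funext t
      rw [hcast n t]
      simp [hu', hu, hv]
      ring
    rw [htarget, hibp, neg_neg, hihs, ih]
    ring
end

section
/- For every real number x ≥ 0, √(1 + x²) + e^x − (1 + x) ≤ e^{(e/2)·x²}, where e is Euler's number. -/
/-! Split at x = 1. On [0, 1], √(1 + x²) ≤ 1 + x²/2 and eˣ ≤ 1 + x + (3/4)x², so the left side is at most
1 + (5/4)x², while e^{(e/2)x²} ≥ 1 + (e/2)x² and 5/4 < e/2. For x ≥ 1, √(1 + x²) ≤ 1 + x leaves only eˣ,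
and x ≤ x² ≤ (e/2)x². -/

namespace Real

theorem sqrt_one_add_sq_le_one_add_sq_div_two (x : ℝ) : √(1 + x ^ 2) ≤ 1 + x ^ 2 / 2 :=
  sqrt_le_iff.2 ⟨by positivity, by nlinarith [sq_nonneg x]⟩

theorem sqrt_one_add_sq_le_one_add {x : ℝ} (hx : 0 ≤ x) : √(1 + x ^ 2) ≤ 1 + x :=
  sqrt_le_iff.2 ⟨by positivity, by nlinarith⟩

theorem exp_le_one_add_add_three_div_four_mul_sq {x : ℝ} (h0 : 0 ≤ x) (h1 : x ≤ 1) :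
    exp x ≤ 1 + x + 3 / 4 * x ^ 2 := by
  have h := exp_bound' h0 h1 (n := 2) (by norm_num)
  simp [Finset.sum_range_succ, Nat.factorial] at h
  linarith

end Real

theorem stmt16 : ∀ x : ℝ, 0 ≤ x →
    Real.sqrt (1 + x ^ 2) + Real.exp x - (1 + x) ≤ Real.exp (Real.exp 1 / 2 * x ^ 2) := by
  intro x hx
  have he : (2.7182818283 : ℝ) < Real.exp 1 := Real.exp_one_gt_d9
  rcases le_or_gt x 1 with hx1 | hx1
  · have hsqrt := Real.sqrt_one_add_sq_le_one_add_sq_div_two x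
    have hexp := Real.exp_le_one_add_add_three_div_four_mul_sq hx hx1
    have hrhs := Real.add_one_le_exp (Real.exp 1 / 2 * x ^ 2)
    nlinarith [sq_nonneg x]
  · have hsqrt := Real.sqrt_one_add_sq_le_one_add hx
    have hexp : Real.exp x ≤ Real.exp (Real.exp 1 / 2 * x ^ 2) :=
      Real.exp_le_exp.2 (by nlinarith)
    linarith
end

section
/- Let H be a nonzero d×d complex Hermitian matrix having at least two distinct eigenvalues, let E₁ be its smallest eigenvalue, E₂ the smallest eigenvalue strictly greater than E₁, and P_g the orthogonal projection onto the E₁-eigenspace of H. Set Z = I − (H − E₂·I)/‖H‖₂ and z₁ = 1 + (E₂ − E₁)/‖H‖₂. Then for every integer n ≥ 1, T_n(z₁) > 0 and ‖T_n(Z)/T_n(z₁) − P_g‖₂ ≤ 1/T_n(z₁). -/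
open Matrix
open scoped ComplexOrder

set_option maxHeartbeats 1000000
set_option synthInstance.maxHeartbeats 400000

namespace StmtAux

open Polynomial Matrix
open scoped Matrix.Norms.L2Operator

lemma cheb_pair {x : ℝ} (hx : 1 ≤ x) (n : ℕ) :
    1 ≤ (Chebyshev.T ℝ n).eval x ∧
      (Chebyshev.T ℝ n).eval x ≤ (Chebyshev.T ℝ (n + 1)).eval x := by
  induction n with
  | zero => simpa [Chebyshev.T_zero, Chebyshev.T_one] using hx
  | succ m ih =>
    obtain ⟨h1, h2⟩ := ih
    have heval : (Chebyshev.T ℝ ((m : ℤ) + 2)).eval x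
        = 2 * x * (Chebyshev.T ℝ ((m : ℤ) + 1)).eval x - (Chebyshev.T ℝ (m : ℤ)).eval x := by
      rw [Chebyshev.T_add_two]; simp [eval_mul]
    constructor
    · push_cast at h1 h2 ⊢
      nlinarith [heval]
    · push_cast at h1 h2 ⊢
      have : ((m : ℤ) + 1 + 1) = (m : ℤ) + 2 := by ring
      rw [this, heval]
      nlinarith

lemma cheb_abs_le {y : ℝ} (h1 : -1 ≤ y) (h2 : y ≤ 1) (n : ℤ) :
    |(Chebyshev.T ℝ n).eval y| ≤ 1 := by
  have h := Chebyshev.T_real_cos (Real.arccos y) n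
  rw [Real.cos_arccos h1 h2] at h
  rw [h]
  exact Real.abs_cos_le_one _

variable {d : ℕ}

lemma specNorm_eq (A : Matrix (Fin d) (Fin d) ℂ) : specNorm A = ‖A‖ := rfl

lemma specNorm_pos {A : Matrix (Fin d) (Fin d) ℂ} (h : A ≠ 0) : 0 < specNorm A := by
  rw [specNorm_eq]
  exact norm_pos_iff.mpr h

lemma specNorm_conj (hd : 1 ≤ d) (U : Matrix.unitaryGroup (Fin d) ℂ)
    (A : Matrix (Fin d) (Fin d) ℂ) :
    specNorm ((U : Matrix (Fin d) (Fin d) ℂ) * A * star (U : Matrix (Fin d) (Fin d) ℂ))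
      = specNorm A := by
  haveI : Nonempty (Fin d) := ⟨⟨0, hd⟩⟩
  haveI : Nontrivial (Matrix (Fin d) (Fin d) ℂ) := inferInstance
  rw [specNorm_eq, specNorm_eq, mul_assoc]
  rw [CStarRing.norm_coe_unitary_mul U]
  have : star (U : Matrix (Fin d) (Fin d) ℂ) = ((star U : Matrix.unitaryGroup (Fin d) ℂ) :
      Matrix (Fin d) (Fin d) ℂ) := rfl
  rw [this]
  exact CStarRing.norm_mul_coe_unitary A _

lemma specNorm_diagonal_le (w : Fin d → ℂ) (C : ℝ) (hC : 0 ≤ C) (h : ∀ i, ‖w i‖ ≤ C) :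
    specNorm (diagonal w) ≤ C := by
  rw [specNorm]
  refine ContinuousLinearMap.opNorm_le_bound _ hC fun x => ?_
  have hval : ∀ i, (Matrix.toEuclideanCLM (𝕜 := ℂ) (diagonal w) x) i = w i * x i := by
    intro i
    have h0 := congrFun (Matrix.ofLp_toEuclideanCLM (diagonal w) x) i
    simpa [Matrix.toLin'_apply, Matrix.mulVec_diagonal] using h0
  rw [EuclideanSpace.norm_eq, EuclideanSpace.norm_eq]
  have hle : ∑ i, ‖(Matrix.toEuclideanCLM (𝕜 := ℂ) (diagonal w) x) i‖ ^ 2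
      ≤ C ^ 2 * ∑ i, ‖x i‖ ^ 2 := by
    rw [Finset.mul_sum]
    refine Finset.sum_le_sum fun i _ => ?_
    rw [hval i, norm_mul]
    calc (‖w i‖ * ‖x i‖) ^ 2 ≤ (C * ‖x i‖) ^ 2 := by
          gcongr
          exact h i
      _ = C ^ 2 * ‖x i‖ ^ 2 := by ring
  calc Real.sqrt (∑ i, ‖(Matrix.toEuclideanCLM (𝕜 := ℂ) (diagonal w) x) i‖ ^ 2)
      ≤ Real.sqrt (C ^ 2 * ∑ i, ‖x i‖ ^ 2) := Real.sqrt_le_sqrt hle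
    _ = C * Real.sqrt (∑ i, ‖x i‖ ^ 2) := by
        rw [Real.sqrt_mul (sq_nonneg C), Real.sqrt_sq hC]

lemma le_specNorm_diagonal (w : Fin d → ℂ) (i : Fin d) : ‖w i‖ ≤ specNorm (diagonal w) := by
  rw [specNorm]
  have key : Matrix.toEuclideanCLM (𝕜 := ℂ) (diagonal w) (EuclideanSpace.single i 1)
      = EuclideanSpace.single i (w i) := by
    refine PiLp.ext fun j => ?_
    have h0 := congrFun (Matrix.ofLp_toEuclideanCLM (diagonal w)
      (EuclideanSpace.single i 1)) j
    simp only [Matrix.toLin'_apply, Matrix.mulVec_diagonal] at h0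
    have h0' : (Matrix.toEuclideanCLM (𝕜 := ℂ) (diagonal w)) (EuclideanSpace.single i 1) j
        = w j * (EuclideanSpace.single i (1:ℂ)) j := h0
    rw [h0', EuclideanSpace.single_apply, EuclideanSpace.single_apply]
    by_cases hji : j = i <;> simp [hji]
  have h1 := (Matrix.toEuclideanCLM (𝕜 := ℂ) (diagonal w)).le_opNorm
    (EuclideanSpace.single i 1)
  rw [key, EuclideanSpace.norm_single, EuclideanSpace.norm_single] at h1
  simpa using h1

end StmtAux

namespace StmtAux

open Polynomial Matrix

variable {d : ℕ}

/-- Conjugation by a unitary matrix as an algebra homomorphism. -/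
noncomputable def conj (U : Matrix.unitaryGroup (Fin d) ℂ) :
    Matrix (Fin d) (Fin d) ℂ →ₐ[ℂ] Matrix (Fin d) (Fin d) ℂ where
  toFun B := (U : Matrix (Fin d) (Fin d) ℂ) * B * star (U : Matrix (Fin d) (Fin d) ℂ)
  map_one' := by
    rw [mul_one]
    exact Matrix.mem_unitaryGroup_iff.mp U.2
  map_mul' A B := by
    have h : star (U : Matrix (Fin d) (Fin d) ℂ) * (U : Matrix (Fin d) (Fin d) ℂ) = 1 :=
      Matrix.mem_unitaryGroup_iff'.mp U.2
    have key : star (U : Matrix (Fin d) (Fin d) ℂ) *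
        ((U : Matrix (Fin d) (Fin d) ℂ) * (B * star (U : Matrix (Fin d) (Fin d) ℂ)))
        = B * star (U : Matrix (Fin d) (Fin d) ℂ) := by
      rw [← mul_assoc, h, one_mul]
    simp only [mul_assoc]
    rw [key]
  map_zero' := by simp
  map_add' A B := by
    simp [mul_add, add_mul]
  commutes' c := by
    have hUU : (U : Matrix (Fin d) (Fin d) ℂ) * star (U : Matrix (Fin d) (Fin d) ℂ) = 1 :=
      Matrix.mem_unitaryGroup_iff.mp U.2
    simp only [Algebra.algebraMap_eq_smul_one]
    rw [Matrix.mul_smul, mul_one, Matrix.smul_mul, hUU]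

@[simp] lemma conj_apply (U : Matrix.unitaryGroup (Fin d) ℂ) (B : Matrix (Fin d) (Fin d) ℂ) :
    conj U B = (U : Matrix (Fin d) (Fin d) ℂ) * B * star (U : Matrix (Fin d) (Fin d) ℂ) := rfl

lemma eq_of_mulVec {A B : Matrix (Fin d) (Fin d) ℂ} (h : ∀ v, A *ᵥ v = B *ᵥ v) : A = B := by
  ext i j
  simpa [Matrix.mulVec_single] using congrFun (h (Pi.single j 1)) i

lemma aeval_conj_diagonal (U : Matrix.unitaryGroup (Fin d) ℂ) (w : Fin d → ℂ) (p : ℂ[X]) :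
    Polynomial.aeval (conj U (diagonal w)) p
      = conj U (diagonal fun i => p.eval (w i)) := by
  have hd : diagonal w = Matrix.diagonalAlgHom (n := Fin d) (α := ℂ) ℂ w := rfl
  have h1 : Polynomial.aeval (diagonal w) p = diagonal (fun i => p.eval (w i)) := by
    rw [hd, Polynomial.aeval_algHom_apply (Matrix.diagonalAlgHom (n := Fin d) (α := ℂ) ℂ) w p]
    have h2 : (Polynomial.aeval w p : Fin d → ℂ) = fun i => p.eval (w i) := by
      funext i; simp [Polynomial.aeval_fn_apply]
    rw [h2]
    rfl
  rw [Polynomial.aeval_algHom_apply (conj U) (diagonal w) p, h1]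

end StmtAux

namespace StmtAux

open Polynomial Matrix

variable {d : ℕ} {H : Matrix (Fin d) (Fin d) ℂ}

lemma diag_vec (hH : H.IsHermitian) (v : Fin d → ℂ) (ρ : ℂ) (hv : H *ᵥ v = ρ • v) :
    diagonal (RCLike.ofReal ∘ hH.eigenvalues) *ᵥ
        (star (hH.eigenvectorUnitary : Matrix (Fin d) (Fin d) ℂ) *ᵥ v)
      = ρ • (star (hH.eigenvectorUnitary : Matrix (Fin d) (Fin d) ℂ) *ᵥ v) := by
  set U : Matrix (Fin d) (Fin d) ℂ := (hH.eigenvectorUnitary : Matrix (Fin d) (Fin d) ℂ) with hU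
  have hUU : U * star U = 1 := Matrix.mem_unitaryGroup_iff.mp hH.eigenvectorUnitary.2
  have h1 : diagonal (RCLike.ofReal ∘ hH.eigenvalues) * star U = star U * H := by
    rw [← hH.conjStarAlgAut_star_eigenvectorUnitary, Unitary.conjStarAlgAut_apply, Unitary.coe_star, star_star, mul_assoc, ← hU, hUU, mul_one]
  rw [Matrix.mulVec_mulVec, h1, ← Matrix.mulVec_mulVec, hv, Matrix.mulVec_smul]

lemma exists_eig_index (hH : H.IsHermitian) {v : Fin d → ℂ} {ρ : ℝ} (hv0 : v ≠ 0)
    (hv : H *ᵥ v = (ρ : ℂ) • v) : ∃ i, hH.eigenvalues i = ρ := by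
  set U : Matrix (Fin d) (Fin d) ℂ := (hH.eigenvectorUnitary : Matrix (Fin d) (Fin d) ℂ) with hU
  have hUU : U * star U = 1 := Matrix.mem_unitaryGroup_iff.mp hH.eigenvectorUnitary.2
  set c : Fin d → ℂ := star U *ᵥ v with hc
  have hc0 : c ≠ 0 := by
    intro h0
    apply hv0
    have : U *ᵥ c = v := by
      rw [hc, Matrix.mulVec_mulVec, hUU, Matrix.one_mulVec]
    rw [← this, h0, Matrix.mulVec_zero]
  have hDc := diag_vec hH v (ρ : ℂ) hv
  obtain ⟨j, hj⟩ := Function.ne_iff.mp hc0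
  have hcomp := congrFun hDc j
  rw [Matrix.mulVec_diagonal] at hcomp
  have : ((hH.eigenvalues j : ℝ) : ℂ) = (ρ : ℂ) := by
    have h2 : ((hH.eigenvalues j : ℝ) : ℂ) * c j = (ρ : ℂ) * c j := by
      simpa [Pi.smul_apply, smul_eq_mul] using hcomp
    exact mul_right_cancel₀ hj h2
  exact ⟨j, by exact_mod_cast this⟩

lemma eig_mem (hH : H.IsHermitian) (i : Fin d) :
    ∃ v : Fin d → ℂ, v ≠ 0 ∧ H *ᵥ v = ((hH.eigenvalues i : ℝ) : ℂ) • v := by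
  refine ⟨⇑(hH.eigenvectorBasis i), ?_, ?_⟩
  · intro h0
    have := hH.eigenvectorBasis.orthonormal.ne_zero i
    apply this
    ext j
    exact congrFun h0 j
  · have := hH.mulVec_eigenvectorBasis i
    rw [this]
    funext j
    simp [Pi.smul_apply, Complex.real_smul]

end StmtAux

theorem stmt18 {d : ℕ} (hd : 1 ≤ d)
    (H : Matrix (Fin d) (Fin d) ℂ) (hH : H.IsHermitian) (hH0 : H ≠ 0)
    (E₁ E₂ : ℝ)
    -- E₁ is the smallest eigenvalue of H
    (hE₁ : IsLeast {μ : ℝ | ∃ v : Fin d → ℂ, v ≠ 0 ∧ H.mulVec v = (μ : ℂ) • v} E₁)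
    -- E₂ is the smallest eigenvalue of H strictly greater than E₁
    (hE₂ : IsLeast
      {μ : ℝ | (∃ v : Fin d → ℂ, v ≠ 0 ∧ H.mulVec v = (μ : ℂ) • v) ∧ E₁ < μ} E₂)
    -- P is the orthogonal projection onto the E₁-eigenspace of H
    (P : Matrix (Fin d) (Fin d) ℂ) (hP : P.IsHermitian) (hP2 : P * P = P)
    (hPrange : ∀ v : Fin d → ℂ, H.mulVec v = (E₁ : ℂ) • v ↔ P.mulVec v = v)
    (n : ℕ) (hn : 1 ≤ n) :
    0 < (Polynomial.Chebyshev.T ℝ n).eval (1 + (E₂ - E₁) / specNorm H) ∧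
    specNorm
        ((((Polynomial.Chebyshev.T ℝ n).eval (1 + (E₂ - E₁) / specNorm H) : ℝ) : ℂ)⁻¹ •
            (Polynomial.aeval
              ((1 : Matrix (Fin d) (Fin d) ℂ) -
                ((specNorm H : ℝ) : ℂ)⁻¹ •
                  (H - (E₂ : ℂ) • (1 : Matrix (Fin d) (Fin d) ℂ)))
              (Polynomial.Chebyshev.T ℂ n)) - P)
      ≤ 1 / (Polynomial.Chebyshev.T ℝ n).eval (1 + (E₂ - E₁) / specNorm H) := by
  classical
  set μ : Fin d → ℝ := hH.eigenvalues with hμdef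
  set U : Matrix.unitaryGroup (Fin d) ℂ := hH.eigenvectorUnitary with hUdef
  have hspec : H = StmtAux.conj U (diagonal (RCLike.ofReal ∘ μ)) := hH.spectral_theorem
  set s : ℝ := specNorm H with hsdef
  have hs0 : 0 < s := StmtAux.specNorm_pos hH0
  have hs_eq : s = specNorm (diagonal (RCLike.ofReal ∘ μ)) := by
    rw [hsdef]
    conv_lhs => rw [hspec]
    exact StmtAux.specNorm_conj hd U _
  have habs : ∀ i, |μ i| ≤ s := by
    intro i
    have h := StmtAux.le_specNorm_diagonal (RCLike.ofReal ∘ μ) i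
    rw [← hs_eq] at h
    simpa [Function.comp_apply, Real.norm_eq_abs] using h
  have hmem : ∀ i, μ i ∈ {ρ : ℝ | ∃ v : Fin d → ℂ, v ≠ 0 ∧ H.mulVec v = (ρ : ℂ) • v} :=
    fun i => StmtAux.eig_mem hH i
  have hE₁le : ∀ i, E₁ ≤ μ i := fun i => hE₁.2 (hmem i)
  have hgap : E₁ < E₂ := hE₂.1.2
  obtain ⟨⟨vE₂, hvE₂0, hvE₂⟩, _⟩ := hE₂.1
  obtain ⟨i₂, hi₂⟩ := StmtAux.exists_eig_index hH hvE₂0 hvE₂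
  have hE₂abs : |E₂| ≤ s := hi₂ ▸ habs i₂
  have hdich : ∀ i, μ i = E₁ ∨ E₂ ≤ μ i := by
    intro i
    rcases eq_or_lt_of_le (hE₁le i) with h | h
    · exact Or.inl h.symm
    · exact Or.inr (hE₂.2 ⟨hmem i, h⟩)
  set z₁ : ℝ := 1 + (E₂ - E₁) / s with hz₁def
  have hz₁ : 1 ≤ z₁ := by
    have h0 : 0 ≤ (E₂ - E₁) / s := div_nonneg (by linarith) hs0.le
    simp only [hz₁def]
    linarith
  set t : ℝ := (Polynomial.Chebyshev.T ℝ n).eval z₁ with htdef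
  have ht1 : 1 ≤ t := (StmtAux.cheb_pair hz₁ n).1
  have ht0 : (0 : ℝ) < t := lt_of_lt_of_le one_pos ht1
  refine ⟨ht0, ?_⟩
  -- the indicator diagonal projection
  set ind : Fin d → ℂ := fun i => if μ i = E₁ then 1 else 0 with hinddef
  set Q : Matrix (Fin d) (Fin d) ℂ := StmtAux.conj U (diagonal ind) with hQdef
  have hHQ : H * Q = (E₁ : ℂ) • Q := by
    rw [hspec, hQdef, ← _root_.map_mul, Matrix.diagonal_mul_diagonal]
    have hfun : (fun i => (RCLike.ofReal ∘ μ) i * ind i) = (E₁ : ℂ) • ind := by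
      funext i
      by_cases h : μ i = E₁ <;>
        simp [hinddef, h, Pi.smul_apply, smul_eq_mul]
    rw [hfun, Matrix.diagonal_smul, _root_.map_smul]
  have hPQ : P * Q = Q := by
    apply StmtAux.eq_of_mulVec
    intro v
    have h1 : H *ᵥ (Q *ᵥ v) = (E₁ : ℂ) • (Q *ᵥ v) := by
      rw [Matrix.mulVec_mulVec, hHQ, Matrix.smul_mulVec]
    have h2 := (hPrange (Q *ᵥ v)).mp h1
    rwa [Matrix.mulVec_mulVec] at h2
  have hQfix : ∀ w : Fin d → ℂ, H *ᵥ w = (E₁ : ℂ) • w → Q *ᵥ w = w := by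
    intro w hw
    have hDc := StmtAux.diag_vec hH w (E₁ : ℂ) hw
    have hUU : (U : Matrix (Fin d) (Fin d) ℂ) * star (U : Matrix (Fin d) (Fin d) ℂ) = 1 :=
      Matrix.mem_unitaryGroup_iff.mp U.2
    have hcind : diagonal ind *ᵥ (star (U : Matrix (Fin d) (Fin d) ℂ) *ᵥ w)
        = star (U : Matrix (Fin d) (Fin d) ℂ) *ᵥ w := by
      funext i
      rw [Matrix.mulVec_diagonal]
      by_cases h : μ i = E₁
      · simp [hinddef, h]
      · have hi := congrFun hDc i
        rw [Matrix.mulVec_diagonal] at hi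
        have hz : (star (U : Matrix (Fin d) (Fin d) ℂ) *ᵥ w) i = 0 := by
          have hne : ((μ i : ℝ) : ℂ) ≠ ((E₁ : ℝ) : ℂ) := by exact_mod_cast h
          have h3 : (((μ i : ℝ) : ℂ) - (E₁ : ℂ)) *
              (star (U : Matrix (Fin d) (Fin d) ℂ) *ᵥ w) i = 0 := by
            have h4 : ((μ i : ℝ) : ℂ) * (star (U : Matrix (Fin d) (Fin d) ℂ) *ᵥ w) i
                = (E₁ : ℂ) * (star (U : Matrix (Fin d) (Fin d) ℂ) *ᵥ w) i := by
              simpa [Pi.smul_apply, smul_eq_mul] using hi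
            rw [sub_mul, h4, sub_self]
          rcases mul_eq_zero.mp h3 with h5 | h5
          · exact absurd (sub_eq_zero.mp h5) hne
          · exact h5
        simp [hinddef, h, hz]
    rw [hQdef, StmtAux.conj_apply, ← Matrix.mulVec_mulVec, ← Matrix.mulVec_mulVec, hcind,
      Matrix.mulVec_mulVec, hUU, Matrix.one_mulVec]
  have hQP : Q * P = P := by
    apply StmtAux.eq_of_mulVec
    intro v
    have hPfix : P *ᵥ (P *ᵥ v) = P *ᵥ v := by rw [Matrix.mulVec_mulVec, hP2]
    have h1 := (hPrange (P *ᵥ v)).mpr hPfix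
    have h2 := hQfix _ h1
    rwa [Matrix.mulVec_mulVec] at h2
  have hDst : star (diagonal ind) = diagonal ind := by
    have hind : star ind = ind := by
      funext i
      by_cases h : μ i = E₁ <;> simp [hinddef, h]
    rw [Matrix.star_eq_conjTranspose, Matrix.diagonal_conjTranspose, hind]
  have hQherm : star Q = Q := by
    rw [hQdef, StmtAux.conj_apply, StarMul.star_mul, StarMul.star_mul, star_star, hDst, ← mul_assoc]
  have hPherm : star P = P := hP
  have hPQ' : P * Q = P := by
    have h := congrArg star hQP
    rwa [StarMul.star_mul, hQherm, hPherm] at h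
  have hPeqQ : P = Q := hPQ'.symm.trans hPQ
  -- the shifted matrix
  set g : Fin d → ℝ := fun i => 1 - (μ i - E₂) / s with hgdef
  set Z : Matrix (Fin d) (Fin d) ℂ :=
    (1 : Matrix (Fin d) (Fin d) ℂ) - (s : ℂ)⁻¹ • (H - (E₂ : ℂ) • 1) with hZdef
  have hZ : Z = StmtAux.conj U (diagonal fun i => ((g i : ℝ) : ℂ)) := by
    have hdg : (diagonal fun i => ((g i : ℝ) : ℂ)) =
        (1 : Matrix (Fin d) (Fin d) ℂ) -
          (s : ℂ)⁻¹ • (diagonal (RCLike.ofReal ∘ μ) - (E₂ : ℂ) • 1) := by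
      ext i j
      by_cases h : i = j
      · subst h
        simp only [Matrix.diagonal_apply_eq, Matrix.sub_apply, Matrix.smul_apply,
          Matrix.one_apply_eq, Function.comp_apply, smul_eq_mul, hgdef]
        have hsne : (s : ℂ) ≠ 0 := by exact_mod_cast hs0.ne'
        push_cast
        field_simp
        rw [RCLike.ofReal_eq_complex_ofReal]
      · simp [Matrix.diagonal_apply_ne _ h, Matrix.one_apply_ne h]
    rw [hZdef, hdg, _root_.map_sub, _root_.map_one, _root_.map_smul, _root_.map_sub, _root_.map_smul, _root_.map_one, ← hspec]
  have haeval : Polynomial.aeval Z (Polynomial.Chebyshev.T ℂ n)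
      = StmtAux.conj U (diagonal fun i =>
          (((Polynomial.Chebyshev.T ℝ n).eval (g i) : ℝ) : ℂ)) := by
    rw [hZ, StmtAux.aeval_conj_diagonal]
    congr 1
    congr 1
    funext i
    have h := Polynomial.Chebyshev.algebraMap_eval_T (R := ℝ) (R' := ℂ) (g i) n
    simpa using h.symm
  set w : Fin d → ℂ :=
    fun i => ((t : ℝ) : ℂ)⁻¹ * (((Polynomial.Chebyshev.T ℝ n).eval (g i) : ℝ) : ℂ) - ind i
    with hwdef
  have hM : ((t : ℝ) : ℂ)⁻¹ • Polynomial.aeval Z (Polynomial.Chebyshev.T ℂ n) - P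
      = StmtAux.conj U (diagonal w) := by
    rw [haeval, hPeqQ, hQdef, ← _root_.map_smul, ← _root_.map_sub]
    congr 1
    ext i j
    rcases eq_or_ne i j with rfl | hij
    · simp [hwdef, Matrix.diagonal_apply_eq, smul_eq_mul]
    · simp [Matrix.diagonal_apply_ne _ hij, hij]
  rw [hM]
  have hconj : specNorm (StmtAux.conj U (diagonal w)) = specNorm (diagonal w) :=
    StmtAux.specNorm_conj hd U _
  rw [hconj]
  refine StmtAux.specNorm_diagonal_le w (1 / t) (by positivity) fun i => ?_
  rcases hdich i with h | h
  · have hgz : g i = z₁ := by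
      simp only [hgdef, hz₁def, h]
      ring
    have hw0 : w i = 0 := by
      simp only [hwdef, hinddef, if_pos h, hgz, ← htdef]
      rw [inv_mul_cancel₀ (by exact_mod_cast ht0.ne' : ((t : ℝ) : ℂ) ≠ 0), sub_self]
    rw [hw0, norm_zero]
    positivity
  · have hne : μ i ≠ E₁ := fun he => by rw [he] at h; linarith
    obtain ⟨hμlb, hμub⟩ := abs_le.mp (habs i)
    obtain ⟨hE₂lb, hE₂ub⟩ := abs_le.mp hE₂abs
    have hglb : -1 ≤ g i := by
      simp only [hgdef]
      have h2 : (μ i - E₂) / s ≤ 2 := by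
        rw [div_le_iff₀ hs0]
        linarith
      linarith
    have hgub : g i ≤ 1 := by
      simp only [hgdef]
      have h2 : 0 ≤ (μ i - E₂) / s := div_nonneg (by linarith) hs0.le
      linarith
    have hcheb := StmtAux.cheb_abs_le hglb hgub n
    simp only [hwdef, hinddef, if_neg hne, sub_zero]
    rw [norm_mul, norm_inv]
    have h2 : ‖((t : ℝ) : ℂ)‖ = t := by
      rw [Complex.norm_real, Real.norm_eq_abs, abs_of_pos ht0]
    have h3 : ‖(((Polynomial.Chebyshev.T ℝ n).eval (g i) : ℝ) : ℂ)‖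
        = |(Polynomial.Chebyshev.T ℝ n).eval (g i)| := by
      rw [Complex.norm_real, Real.norm_eq_abs]
    rw [h2, h3, one_div]
    calc t⁻¹ * |(Polynomial.Chebyshev.T ℝ n).eval (g i)| ≤ t⁻¹ * 1 :=
          mul_le_mul_of_nonneg_left hcheb (inv_nonneg.mpr ht0.le)
      _ = t⁻¹ := mul_one _
end
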